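/- arXiv:1209.4799 — 9 statements merged into one kernel-verified Lean document; each statement's English description precedes it below -/
import Mathlib

section
/- For every n ≥ 1, the entrywise maximum and the entrywise minimum of two Gog triangles of size n are again Gog triangles of size n; that is, the Gog triangles of size n form a sublattice of the lattice of Gelfand-Tsetlin triangles of size n. -/
/-- A Gelfand-Tsetlin triangle of size `n`: a triangular array `X i j` for
`n ≥ i ≥ j ≥ 1` of positive integers with `X (i+1) j ≤ X i j ≤ X (i+1) (j+1)`. -/
def IsGT (n : ℕ) (X : ℕ → ℕ → ℕ) : Prop :=
  (∀ i j, 1 ≤ j → j ≤ i → i ≤ n → 1 ≤ X i j) ∧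
  (∀ i j, 1 ≤ j → j ≤ i → i + 1 ≤ n → X (i + 1) j ≤ X i j ∧ X i j ≤ X (i + 1) (j + 1))

/-- A Gog triangle of size `n`: a Gelfand-Tsetlin triangle with strictly increasing
rows and top row `X n j = j`. -/
def IsGog (n : ℕ) (X : ℕ → ℕ → ℕ) : Prop :=
  IsGT n X ∧
  (∀ i j, 1 ≤ j → j + 1 ≤ i → i ≤ n → X i j < X i (j + 1)) ∧
  (∀ j, 1 ≤ j → j ≤ n → X n j = j)

/-- For every `n ≥ 1`, the entrywise maximum and the entrywise minimum of two Gog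
triangles of size `n` are again Gog triangles of size `n`: the Gog triangles form a
sublattice of the lattice of Gelfand-Tsetlin triangles of size `n`. -/
theorem gog_triangles_sublattice (n : ℕ) (hn : 1 ≤ n) (X Y : ℕ → ℕ → ℕ)
    (hX : IsGog n X) (hY : IsGog n Y) :
    IsGog n (fun i j => max (X i j) (Y i j)) ∧
    IsGog n (fun i j => min (X i j) (Y i j)) := by
  obtain ⟨⟨hX1, hX2⟩, hX3, hX4⟩ := hX
  obtain ⟨⟨hY1, hY2⟩, hY3, hY4⟩ := hY
  refine ⟨⟨⟨fun i j h1 h2 h3 => ?_, fun i j h1 h2 h3 => ?_⟩,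
      fun i j h1 h2 h3 => ?_, fun j h1 h2 => ?_⟩,
    ⟨⟨fun i j h1 h2 h3 => ?_, fun i j h1 h2 h3 => ?_⟩,
      fun i j h1 h2 h3 => ?_, fun j h1 h2 => ?_⟩⟩ <;> simp only
  · have := hX1 i j h1 h2 h3; omega
  · have := hX2 i j h1 h2 h3; have := hY2 i j h1 h2 h3; omega
  · have := hX3 i j h1 h2 h3; have := hY3 i j h1 h2 h3; omega
  · have := hX4 j h1 h2; have := hY4 j h1 h2; omega
  · have := hX1 i j h1 h2 h3; have := hY1 i j h1 h2 h3; omega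
  · have := hX2 i j h1 h2 h3; have := hY2 i j h1 h2 h3; omega
  · have := hX3 i j h1 h2 h3; have := hY3 i j h1 h2 h3; omega
  · have := hX4 j h1 h2; have := hY4 j h1 h2; omega
end

section
/- Let X be an (n,k) right Gog trapezoid. The triangular array Y of size n defined by Y_{i,j} = X_{i,j} for i−j ≤ k−1 and Y_{i,j} = j for i ≥ j+k is a Gog triangle, and it is the minimal Gog triangle extending X: every Gog triangle Z of size n whose restriction to the k rightmost SW-NE diagonals equals X satisfies Y ≤ Z entrywise. -/
lemma gog_ge (n : ℕ) (Z : ℕ → ℕ → ℕ) (hZ : IsGog n Z) :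
    ∀ j i, 1 ≤ j → j ≤ i → i ≤ n → j ≤ Z i j := by
  intro j
  induction j with
  | zero => intro i h _ _; omega
  | succ m ih =>
    intro i h1 h2 h3
    rcases Nat.eq_zero_or_pos m with hm | hm
    · subst hm; exact hZ.1.1 i 1 le_rfl h2 h3
    · have h4 := hZ.2.1 i m hm h2 h3
      have h5 := ih i hm (by omega) h3
      omega

/-- Let `X` be an `(n,k)` right Gog trapezoid (i.e. it agrees with some Gog triangle
of size `n` on the `k` rightmost SW-NE diagonals `i - j ≤ k - 1`). Then the triangle
`Y` with `Y i j = X i j` for `i < j + k` and `Y i j = j` for `i ≥ j + k` is a Gog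
triangle, and it is the minimal Gog triangle extending `X`. -/
theorem right_gog_trapezoid_min_completion (n k : ℕ) (hk : 1 ≤ k) (hkn : k ≤ n)
    (X : ℕ → ℕ → ℕ)
    (hX : ∃ Z, IsGog n Z ∧
      ∀ i j, 1 ≤ j → j ≤ i → i ≤ n → i < j + k → X i j = Z i j) :
    IsGog n (fun i j => if i < j + k then X i j else j) ∧
    ∀ Z : ℕ → ℕ → ℕ, IsGog n Z →
      (∀ i j, 1 ≤ j → j ≤ i → i ≤ n → i < j + k → Z i j = X i j) →
      ∀ i j, 1 ≤ j → j ≤ i → i ≤ n →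
        (if i < j + k then X i j else j) ≤ Z i j := by
  obtain ⟨Z, hZ, hXZ⟩ := hX
  constructor
  · refine ⟨⟨?_, ?_⟩, ?_, ?_⟩
    · intro i j h1 h2 h3
      by_cases h : i < j + k
      · simp only [if_pos h]
        rw [hXZ i j h1 h2 h3 h]
        exact hZ.1.1 i j h1 h2 h3
      · simp only [if_neg h]; exact h1
    · intro i j h1 h2 h3
      by_cases h : i < j + k
      · have hij : X i j = Z i j := hXZ i j h1 h2 (by omega) h
        have hij1 : X (i+1) (j+1) = Z (i+1) (j+1) :=
          hXZ (i+1) (j+1) (by omega) (by omega) h3 (by omega)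
        constructor
        · by_cases h' : i + 1 < j + k
          · simp only [if_pos h, if_pos h']
            rw [hij, hXZ (i+1) j h1 (by omega) h3 h']
            exact (hZ.1.2 i j h1 h2 h3).1
          · simp only [if_pos h, if_neg h']
            rw [hij]
            exact gog_ge n Z hZ j i h1 h2 (by omega)
        · have h'' : i + 1 < j + 1 + k := by omega
          simp only [if_pos h, if_pos h'']
          rw [hij, hij1]
          exact (hZ.1.2 i j h1 h2 h3).2
      · have h2' : ¬ (i + 1 < j + k) := by omega
        have h3' : ¬ (i + 1 < j + 1 + k) := by omega
        simp only [if_neg h, if_neg h2', if_neg h3']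
        omega
    · intro i j h1 h2 h3
      by_cases h : i < j + k
      · have h' : i < j + 1 + k := by omega
        simp only [if_pos h, if_pos h']
        rw [hXZ i j h1 (by omega) h3 h, hXZ i (j+1) (by omega) h2 h3 h']
        exact hZ.2.1 i j h1 h2 h3
      · by_cases h' : i < j + 1 + k
        · simp only [if_neg h, if_pos h']
          rw [hXZ i (j+1) (by omega) h2 h3 h']
          have := gog_ge n Z hZ (j+1) i (by omega) h2 h3
          omega
        · simp only [if_neg h, if_neg h']; omega
    · intro j h1 h2
      by_cases h : n < j + k
      · simp only [if_pos h]
        rw [hXZ n j h1 h2 le_rfl h]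
        exact hZ.2.2 j h1 h2
      · simp only [if_neg h]
  · intro W hW hWX i j h1 h2 h3
    by_cases h : i < j + k
    · simp only [if_pos h]
      rw [← hWX i j h1 h2 h3 h]
    · simp only [if_neg h]
      exact gog_ge n W hW j i h1 h2 h3
end

section
/- Let X be an (n,k) left Gog trapezoid. The triangular array Y of size n defined by Y_{i,j} = X_{i,j} for j ≤ k and Y_{i,j} = max(X_{i,k}+j−k, X_{i−1,k}+j−k−1, …, X_{i−j+k,k}) for j ≥ k is a Gog triangle, and it is the minimal Gog triangle extending X: every Gog triangle Z of size n whose restriction to the k leftmost NW-SE diagonals equals X satisfies Y ≤ Z entrywise. -/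
lemma gog_diag {n : ℕ} {Z : ℕ → ℕ → ℕ} (hZ : IsGog n Z) :
    ∀ t j i, 1 ≤ j → j + t ≤ i → i ≤ n → Z (i - t) j ≤ Z i (j + t) := by
  intro t
  induction t with
  | zero => intro j i _ _ _; simp
  | succ t ih =>
    intro j i h1 ht hn
    have h2 : Z (i - (t+1)) j ≤ Z (i - t) (j + 1) := by
      have := (hZ.1.2 (i - (t+1)) j h1 (by omega) (by omega)).2
      have he : i - (t+1) + 1 = i - t := by omega
      rwa [he] at this
    have h3 := ih (j+1) i (by omega) (by omega) hn
    have : j + 1 + t = j + (t+1) := by omega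
    rw [this] at h3
    omega

lemma gog_row {n : ℕ} {Z : ℕ → ℕ → ℕ} (hZ : IsGog n Z) :
    ∀ t i j, 1 ≤ j → j + t ≤ i → i ≤ n → Z i j + t ≤ Z i (j + t) := by
  intro t
  induction t with
  | zero => intro i j _ _ _; simp
  | succ t ih =>
    intro i j h1 ht hn
    have h2 := ih i j h1 (by omega) hn
    have h3 := hZ.2.1 i (j + t) (by omega) (by omega) hn
    have he : j + (t+1) = j + t + 1 := rfl
    rw [he]
    omega

lemma gog_ub {n : ℕ} {Z : ℕ → ℕ → ℕ} (hZ : IsGog n Z) :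
    ∀ m i j, i + m = n → 1 ≤ j → j ≤ i → Z i j ≤ j + m := by
  intro m
  induction m with
  | zero =>
    intro i j hi h1 hj
    have hin : i = n := by omega
    subst hin
    have := hZ.2.2 j h1 (by omega)
    omega
  | succ m ih =>
    intro i j hi h1 hj
    have h2 := (hZ.1.2 i j h1 hj (by omega)).2
    have h3 := ih (i+1) (j+1) (by omega) (by omega) (by omega)
    omega

lemma gog_key {n k : ℕ} {Z : ℕ → ℕ → ℕ} (hZ : IsGog n Z) (hk : 1 ≤ k) :
    ∀ i j t, k < j → j ≤ i → i ≤ n → t ≤ j - k → Z (i - t) k + (j - k - t) ≤ Z i j := by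
  intro i j t hkj hj hn ht
  have h1 := gog_diag hZ t k i hk (by omega) hn
  have h2 := gog_row hZ (j - k - t) i (k + t) (by omega) (by omega) hn
  have he : k + t + (j - k - t) = j := by omega
  rw [he] at h2
  omega

/-- Let `X` be an `(n,k)` left Gog trapezoid (i.e. it agrees with some Gog triangle
of size `n` on the `k` leftmost NW-SE diagonals `j ≤ k`). Then the triangle `Y` with
`Y i j = X i j` for `j ≤ k` and
`Y i j = max (X i k + j - k, X (i-1) k + j - k - 1, …, X (i-j+k) k)` for `j ≥ k`
is a Gog triangle, and it is the minimal Gog triangle extending `X`. -/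
theorem left_gog_trapezoid_min_completion (n k : ℕ) (hk : 1 ≤ k) (hkn : k ≤ n)
    (X : ℕ → ℕ → ℕ)
    (hX : ∃ Z, IsGog n Z ∧
      ∀ i j, 1 ≤ j → j ≤ i → i ≤ n → j ≤ k → X i j = Z i j) :
    IsGog n (fun i j => if j ≤ k then X i j
      else Finset.sup (Finset.range (j - k + 1)) (fun t => X (i - t) k + (j - k - t))) ∧
    ∀ Z : ℕ → ℕ → ℕ, IsGog n Z →
      (∀ i j, 1 ≤ j → j ≤ i → i ≤ n → j ≤ k → Z i j = X i j) →
      ∀ i j, 1 ≤ j → j ≤ i → i ≤ n →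
        (if j ≤ k then X i j
          else Finset.sup (Finset.range (j - k + 1)) (fun t => X (i - t) k + (j - k - t)))
          ≤ Z i j := by
  obtain ⟨Z0, hZ0, hXZ0⟩ := hX
  constructor
  · refine ⟨⟨?_, ?_⟩, ?_, ?_⟩
    · -- positivity
      intro i j h1 hj hn
      dsimp only
      by_cases hjk : j ≤ k
      · rw [if_pos hjk, hXZ0 i j h1 hj hn hjk]
        exact hZ0.1.1 i j h1 hj hn
      · rw [if_neg hjk]
        have h0 : (0:ℕ) ∈ Finset.range (j - k + 1) := by simp
        have hle := Finset.le_sup (f := fun t => X (i - t) k + (j - k - t)) h0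
        simp only [Nat.sub_zero] at hle
        have hpos : 1 ≤ X i k := by
          rw [hXZ0 i k hk (by omega) hn le_rfl]
          exact hZ0.1.1 i k hk (by omega) hn
        omega
    · -- GT inequalities
      intro i j h1 hj hn
      dsimp only
      by_cases hjk1 : j + 1 ≤ k
      · have hjk : j ≤ k := by omega
        simp only [if_pos hjk1, if_pos hjk]
        have hgt := hZ0.1.2 i j h1 hj hn
        rw [hXZ0 (i+1) j h1 (by omega) (by omega) (by omega),
            hXZ0 i j h1 hj (by omega) (by omega),
            hXZ0 (i+1) (j+1) (by omega) (by omega) (by omega) hjk1]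
        exact hgt
      · by_cases hjk : j ≤ k
        · -- j = k
          have hjek : j = k := by omega
          subst hjek
          simp only [if_pos (le_refl j), if_neg (show ¬ j + 1 ≤ j by omega)]
          constructor
          · have hgt := (hZ0.1.2 i j h1 hj hn).1
            rw [hXZ0 (i+1) j h1 (by omega) (by omega) le_rfl,
                hXZ0 i j h1 hj (by omega) le_rfl]
            exact hgt
          · have hm : (1:ℕ) ∈ Finset.range (j + 1 - j + 1) := by
              rw [Finset.mem_range]; omega
            have hle := Finset.le_sup (f := fun t => X (i + 1 - t) j + (j + 1 - j - t)) hm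
            have e1 : i + 1 - 1 = i := by omega
            have e2 : j + 1 - j - 1 = 0 := by omega
            simp only [e1, e2, Nat.add_zero] at hle
            exact hle
        · -- k < j
          simp only [if_neg hjk, if_neg (show ¬ j + 1 ≤ k by omega)]
          constructor
          · apply Finset.sup_le
            intro t ht
            rw [Finset.mem_range] at ht
            rcases Nat.eq_zero_or_pos t with h0 | hpos
            · subst h0
              simp only [Nat.sub_zero]
              have hle := Finset.le_sup (f := fun t => X (i - t) k + (j - k - t))
                (show (0:ℕ) ∈ Finset.range (j - k + 1) by simp)
              simp only [Nat.sub_zero] at hle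
              have hgt := (hZ0.1.2 i k hk (by omega) hn).1
              have hx1 : X (i+1) k = Z0 (i+1) k := hXZ0 (i+1) k hk (by omega) (by omega) le_rfl
              have hx2 : X i k = Z0 i k := hXZ0 i k hk (by omega) (by omega) le_rfl
              omega
            · obtain ⟨s, rfl⟩ : ∃ s, t = s + 1 := ⟨t - 1, by omega⟩
              have e1 : i + 1 - (s + 1) = i - s := by omega
              simp only [e1]
              have hle := Finset.le_sup (f := fun t => X (i - t) k + (j - k - t))
                (show s ∈ Finset.range (j - k + 1) by rw [Finset.mem_range]; omega)
              omega
          · apply Finset.sup_le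
            intro t ht
            rw [Finset.mem_range] at ht
            have hm : t + 1 ∈ Finset.range (j + 1 - k + 1) := by
              rw [Finset.mem_range]; omega
            have hle := Finset.le_sup (f := fun t => X (i + 1 - t) k + (j + 1 - k - t)) hm
            have e1 : i + 1 - (t + 1) = i - t := by omega
            have e2 : j + 1 - k - (t + 1) = j - k - t := by omega
            simp only [e1, e2] at hle
            exact hle
    · -- strict rows
      intro i j h1 hj hn
      dsimp only
      by_cases hjk1 : j + 1 ≤ k
      · simp only [if_pos hjk1, if_pos (show j ≤ k by omega)]
        have hst := hZ0.2.1 i j h1 hj hn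
        rw [hXZ0 i j h1 (by omega) hn (by omega), hXZ0 i (j+1) (by omega) hj hn hjk1]
        exact hst
      · by_cases hjk : j ≤ k
        · have hjek : j = k := by omega
          subst hjek
          simp only [if_pos (le_refl j), if_neg (show ¬ j + 1 ≤ j by omega)]
          have hm : (0:ℕ) ∈ Finset.range (j + 1 - j + 1) := by simp
          have hle := Finset.le_sup (f := fun t => X (i - t) j + (j + 1 - j - t)) hm
          have e2 : j + 1 - j - 0 = 1 := by omega
          simp only [Nat.sub_zero, e2] at hle
          omega
        · simp only [if_neg hjk, if_neg (show ¬ j + 1 ≤ k by omega)]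
          have hbot : (⊥ : ℕ) < Finset.sup (Finset.range (j + 1 - k + 1))
              (fun t => X (i - t) k + (j + 1 - k - t)) := by
            have hm : (0:ℕ) ∈ Finset.range (j + 1 - k + 1) := by simp
            have hle := Finset.le_sup (f := fun t => X (i - t) k + (j + 1 - k - t)) hm
            simp only [Nat.sub_zero] at hle
            simp only [Nat.bot_eq_zero]
            omega
          rw [Finset.sup_lt_iff hbot]
          intro t ht
          rw [Finset.mem_range] at ht
          have hm : t ∈ Finset.range (j + 1 - k + 1) := by rw [Finset.mem_range]; omega
          have hle := Finset.le_sup (f := fun t => X (i - t) k + (j + 1 - k - t)) hm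
          have : j + 1 - k - t = j - k - t + 1 := by omega
          omega
    · -- top row
      intro j h1 hjn
      dsimp only
      by_cases hjk : j ≤ k
      · rw [if_pos hjk, hXZ0 n j h1 hjn le_rfl hjk]
        exact hZ0.2.2 j h1 hjn
      · rw [if_neg hjk]
        apply le_antisymm
        · apply Finset.sup_le
          intro t ht
          rw [Finset.mem_range] at ht
          have hub := gog_ub hZ0 t (n - t) k (by omega) hk (by omega)
          rw [hXZ0 (n - t) k hk (by omega) (by omega) le_rfl]
          omega
        · have hm : (0:ℕ) ∈ Finset.range (j - k + 1) := by simp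
          have hle := Finset.le_sup (f := fun t => X (n - t) k + (j - k - t)) hm
          simp only [Nat.sub_zero] at hle
          have hx : X n k = Z0 n k := hXZ0 n k hk hkn le_rfl le_rfl
          have htop := hZ0.2.2 k hk hkn
          omega
  · -- minimality
    intro Z hZ hZX i j h1 hj hn
    by_cases hjk : j ≤ k
    · rw [if_pos hjk]
      exact (hZX i j h1 hj hn hjk).ge
    · rw [if_neg hjk]
      apply Finset.sup_le
      intro t ht
      rw [Finset.mem_range] at ht
      have key := gog_key hZ hk i j t (by omega) hj hn (by omega)
      rw [hZX (i - t) k hk (by omega) (by omega) le_rfl] at key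
      exact key
end

section
/- Let X be a GOGAm triangle of size n and let 1 ≤ k ≤ n. The triangle obtained from X by replacing every entry X_{i,j} with n ≥ i ≥ j+k by the value 1 is again a GOGAm triangle of size n. -/
/-- A GOGAm triangle of size `n`: a Gelfand-Tsetlin triangle with `X n n ≤ n` and,
for all `1 ≤ k ≤ n - 1` and all strictly decreasing sequences
`n = j 0 > j 1 > ⋯ > j (n - k) ≥ 1`,
`(∑ i in range (n-k), (X (j i + i) (j i) - X (j (i+1) + i) (j (i+1))))
  + X (j (n-k) + (n-k)) (j (n-k)) ≤ k`. -/
def IsGOGAm (n : ℕ) (X : ℕ → ℕ → ℕ) : Prop :=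
  IsGT n X ∧ X n n ≤ n ∧
  ∀ k : ℕ, 1 ≤ k → k ≤ n - 1 →
    ∀ j : ℕ → ℕ, j 0 = n → (∀ i, i < n - k → j (i + 1) < j i) → 1 ≤ j (n - k) →
      (∑ i ∈ Finset.range (n - k),
          ((X (j i + i) (j i) : ℤ) - (X (j (i + 1) + i) (j (i + 1)) : ℤ)))
        + (X (j (n - k) + (n - k)) (j (n - k)) : ℤ) ≤ (k : ℤ)

lemma diag_mono {n : ℕ} {X : ℕ → ℕ → ℕ} (h : IsGT n X) (i : ℕ)
    (a b : ℕ) (ha : 1 ≤ a) (hab : a ≤ b) (hbn : b + i ≤ n) :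
    X (a + i) a ≤ X (b + i) b := by
  induction b, hab using Nat.le_induction with
  | base => exact le_refl _
  | succ b hab ih =>
    have h1 : X (a + i) a ≤ X (b + i) b := ih (by omega)
    have h2 : X (b + i) b ≤ X (b + i + 1) (b + 1) :=
      (h.2 (b + i) b (by omega) (by omega) (by omega)).2
    have : b + 1 + i = b + i + 1 := by omega
    rw [this]
    exact le_trans h1 h2

/-- Let `X` be a GOGAm triangle of size `n` and `1 ≤ k ≤ n`. The triangle obtained
from `X` by replacing every entry `X i j` with `n ≥ i ≥ j + k` by the value `1` is
again a GOGAm triangle of size `n`. -/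
theorem gogam_replace_upper_left (n k : ℕ) (hk : 1 ≤ k) (hkn : k ≤ n)
    (X : ℕ → ℕ → ℕ) (hX : IsGOGAm n X) :
    IsGOGAm n (fun i j => if j + k ≤ i then 1 else X i j) := by
  obtain ⟨⟨hpos, hGT⟩, hnn, hsum⟩ := hX
  refine ⟨⟨?_, ?_⟩, ?_, ?_⟩
  · intro i j h1 h2 h3
    simp only
    split
    · exact le_refl _
    · exact hpos i j h1 h2 h3
  · intro i j h1 h2 h3
    simp only
    constructor
    · split
      · split
        · exact le_refl _
        · exact hpos i j h1 h2 (by omega)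
      · rw [if_neg (by omega)]
        exact (hGT i j h1 h2 h3).1
    · split
      · rw [if_pos (by omega)]
      · rw [if_neg (by omega)]
        exact (hGT i j h1 h2 h3).2
  · simp only
    rw [if_neg (by omega)]
    exact hnn
  · intro m hm1 hm2 j hj0 hjdec hj1
    simp only [Nat.cast_ite, Nat.cast_one]
    -- basic facts about j
    have jle : ∀ i, i ≤ n - m → j i + i ≤ n := by
      intro i hi
      induction i with
      | zero => omega
      | succ i ih =>
        have := hjdec i (by omega)
        have := ih (by omega)
        omega
    have jmono : ∀ a b, a ≤ b → b ≤ n - m → j b ≤ j a := by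
      intro a b hab hb
      induction b, hab using Nat.le_induction with
      | base => exact le_refl _
      | succ b hab ih =>
        have := hjdec b (by omega)
        have := ih (by omega)
        omega
    have jpos : ∀ i, i ≤ n - m → 1 ≤ j i := by
      intro i hi
      have := jmono i (n - m) hi (le_refl _)
      omega
    have hXsum := hsum m hm1 hm2 j hj0 hjdec hj1
    by_cases hcase : k ≤ n - m
    · -- replaced case: terms with i ≥ k vanish, last term is 1
      have hterm_nonneg : ∀ i ∈ Finset.range (n - m),
          (0 : ℤ) ≤ (X (j i + i) (j i) : ℤ) - (X (j (i + 1) + i) (j (i + 1)) : ℤ) := by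
        intro i hi
        rw [Finset.mem_range] at hi
        have h1 := jpos (i + 1) (by omega)
        have h2 := hjdec i hi
        have h3 := jle i (by omega)
        have := diag_mono ⟨hpos, hGT⟩ i (j (i + 1)) (j i) h1 (by omega) h3
        omega
      have hsplit : (∑ i ∈ Finset.range (n - m),
          (((if j i + k ≤ j i + i then 1 else X (j i + i) (j i)) : ℤ)
            - ((if j (i + 1) + k ≤ j (i + 1) + i then 1 else X (j (i + 1) + i) (j (i + 1))) : ℤ)))
          = ∑ i ∈ Finset.range k,
              ((X (j i + i) (j i) : ℤ) - (X (j (i + 1) + i) (j (i + 1)) : ℤ)) := by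
        rw [Finset.range_eq_Ico, ← Finset.sum_Ico_consecutive _ (Nat.zero_le k) hcase]
        have e1 : ∀ i ∈ Finset.Ico 0 k,
            (((if j i + k ≤ j i + i then 1 else X (j i + i) (j i)) : ℤ)
              - ((if j (i + 1) + k ≤ j (i + 1) + i then 1 else X (j (i + 1) + i) (j (i + 1))) : ℤ))
            = ((X (j i + i) (j i) : ℤ) - (X (j (i + 1) + i) (j (i + 1)) : ℤ)) := by
          intro i hi
          rw [Finset.mem_Ico] at hi
          rw [if_neg (by omega), if_neg (by omega)]
        have e2 : ∀ i ∈ Finset.Ico k (n - m),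
            (((if j i + k ≤ j i + i then 1 else X (j i + i) (j i)) : ℤ)
              - ((if j (i + 1) + k ≤ j (i + 1) + i then 1 else X (j (i + 1) + i) (j (i + 1))) : ℤ))
            = 0 := by
          intro i hi
          rw [Finset.mem_Ico] at hi
          rw [if_pos (by omega), if_pos (by omega)]
          ring
        rw [Finset.sum_congr rfl e1, Finset.sum_congr rfl e2, Finset.sum_const_zero,
          add_zero, ← Finset.range_eq_Ico]
      rw [hsplit, if_pos (by omega)]
      have hpartial : (∑ i ∈ Finset.range k,
            ((X (j i + i) (j i) : ℤ) - (X (j (i + 1) + i) (j (i + 1)) : ℤ)))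
          ≤ ∑ i ∈ Finset.range (n - m),
            ((X (j i + i) (j i) : ℤ) - (X (j (i + 1) + i) (j (i + 1)) : ℤ)) :=
        Finset.sum_le_sum_of_subset_of_nonneg
          (Finset.range_subset_range.2 hcase) (fun i hi _ => hterm_nonneg i hi)
      have hlast : 1 ≤ X (j (n - m) + (n - m)) (j (n - m)) :=
        hpos _ _ hj1 (by omega) (jle (n - m) (le_refl _))
      have : (1 : ℤ) ≤ (X (j (n - m) + (n - m)) (j (n - m)) : ℤ) := by exact_mod_cast hlast
      linarith
    · -- no entry along the sequence is replaced
      have e1 : ∀ i ∈ Finset.range (n - m),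
          (((if j i + k ≤ j i + i then 1 else X (j i + i) (j i)) : ℤ)
            - ((if j (i + 1) + k ≤ j (i + 1) + i then 1 else X (j (i + 1) + i) (j (i + 1))) : ℤ))
          = ((X (j i + i) (j i) : ℤ) - (X (j (i + 1) + i) (j (i + 1)) : ℤ)) := by
        intro i hi
        rw [Finset.mem_range] at hi
        rw [if_neg (by omega), if_neg (by omega)]
      rw [Finset.sum_congr rfl e1, if_neg (by omega)]
      exact hXsum
end

section
/- Let X be a GOGAm triangle of size n and let n ≥ m ≥ k ≥ 1. Suppose X is constant on each partial SW-NE diagonal (X_{i+l,k+l} for 0 ≤ l ≤ n−i) for every i ≥ m+1. Then the triangle obtained from X by replacing the entries X_{m+l,k+l} for 1 ≤ l ≤ n−m by the value X_{m,k} is again a GOGAm triangle of size n. -/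
/-- Monotonicity along SW-NE diagonals in a GT triangle. -/
lemma gt_diag_mono {n : ℕ} {X : ℕ → ℕ → ℕ} (h : IsGT n X) (a b t : ℕ)
    (hb : 1 ≤ b) (hba : b ≤ a) (han : a + t ≤ n) : X a b ≤ X (a + t) (b + t) := by
  induction t with
  | zero => exact le_rfl
  | succ t ih =>
    have step := (h.2 (a + t) (b + t) (by omega) (by omega) (by omega)).2
    exact le_trans (ih (by omega)) step

/-- Let `X` be a GOGAm triangle of size `n` and `n ≥ m ≥ k ≥ 1`. Suppose `X` is
constant on each partial SW-NE diagonal `(X (i+l) (k+l))₀≤l≤n-i` for every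
`i ≥ m + 1`. Then the triangle obtained from `X` by replacing the entries
`X (m+l) (k+l)`, `1 ≤ l ≤ n - m`, by the value `X m k` (that is, entries at
positions `i, j` with `m < i ≤ n` and `i + k = j + m`) is again a GOGAm triangle. -/
theorem gogam_replace_partial_diagonal (n m k : ℕ) (hk : 1 ≤ k) (hkm : k ≤ m)
    (hmn : m ≤ n) (X : ℕ → ℕ → ℕ) (hX : IsGOGAm n X)
    (hconst : ∀ i, m + 1 ≤ i → i ≤ n → ∀ l, l ≤ n - i → X (i + l) (k + l) = X i k) :
    IsGOGAm n (fun i j => if m < i ∧ i ≤ n ∧ i + k = j + m then X m k else X i j) := by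
  obtain ⟨hGT, hnn, hsum⟩ := hX
  obtain ⟨hpos, hgt⟩ := hGT
  have hdiag := gt_diag_mono (n := n) (X := X) ⟨hpos, hgt⟩
  -- the new triangle is pointwise ≤ the old one
  have hYX : ∀ r c, (if m < r ∧ r ≤ n ∧ r + k = c + m then X m k else X r c) ≤ X r c := by
    intro r c
    split_ifs with hP
    · obtain ⟨h1, h2, h3⟩ := hP
      have := hdiag m k (r - m) hk hkm (by omega)
      have e1 : m + (r - m) = r := by omega
      have e2 : k + (r - m) = c := by omega
      rwa [e1, e2] at this
    · exact le_rfl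
  refine ⟨⟨?_, ?_⟩, ?_, ?_⟩
  · -- positivity
    intro i j hj hji hin
    dsimp only
    split_ifs with hP
    · exact hpos m k hk hkm hmn
    · exact hpos i j hj hji hin
  · -- GT inequalities
    intro i j hj hji hin
    dsimp only
    constructor
    · split_ifs with h1 h2 h2
      · omega
      · -- new value at (i+1, j), old at (i, j):  X m k ≤ X i j
        obtain ⟨ha, hb', hc⟩ := h1
        -- i ≥ m, j = i + 1 + k - m = k + (i - m) + 1, and k + 1 ≤ m since j ≤ i
        have him : m ≤ i := by omega
        have hjlt : k + 1 ≤ m := by omega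
        have step1 := hdiag m k (i - m) hk hkm (by omega)
        have e1 : m + (i - m) = i := by omega
        have e2 : k + (i - m) = j - 1 := by omega
        rw [e1, e2] at step1
        have pair := hgt (i - 1) (j - 1) (by omega) (by omega) (by omega)
        have e3 : i - 1 + 1 = i := by omega
        have e4 : j - 1 + 1 = j := by omega
        rw [e3, e4] at pair
        exact step1.trans (pair.1.trans pair.2)
      · -- new value at (i, j), old at (i+1, j):  X (i+1) j ≤ X m k
        obtain ⟨ha, hb', hc⟩ := h2
        have hcst := hconst (m + 1) le_rfl (by omega) (i - m) (by omega)
        have e1 : m + 1 + (i - m) = i + 1 := by omega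
        have e2 : k + (i - m) = j := by omega
        rw [e1, e2] at hcst
        rw [hcst]
        exact (hgt m k hk hkm (by omega)).1
      · exact (hgt i j hj hji hin).1
    · split_ifs with h1 h2 h2
      · exact le_rfl
      · exact absurd ⟨by omega, hin, by omega⟩ h2
      · -- (i,j) not replaced but (i+1,j+1) replaced: forces i = m, j = k
        obtain ⟨ha, hb', hc⟩ := h2
        have hAn : ¬ m < i := fun h => h1 ⟨h, by omega, by omega⟩
        have hi : i = m := by omega
        have hjk : j = k := by omega
        rw [hi, hjk]
      · exact (hgt i j hj hji hin).2
  · -- X n n condition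
    dsimp only
    split_ifs with hP
    · obtain ⟨h1, h2, h3⟩ := hP
      have := hdiag m k (n - m) hk hkm (by omega)
      have e1 : m + (n - m) = n := by omega
      have e2 : k + (n - m) = n := by omega
      rw [e1, e2] at this
      exact this.trans hnn
    · exact hnn
  · -- the GOGAm sum inequalities
    intro k' hk'1 hk'2 j hj0 hjdec hjN
    dsimp only
    have hjb : ∀ i, i ≤ n - k' → j i + i ≤ n := by
      intro i
      induction i with
      | zero => intro _; omega
      | succ i ih =>
        intro hi
        have h1 := hjdec i (by omega)
        have h2 := ih (by omega)
        omega
    have hterm : ∀ i ∈ Finset.range (n - k'),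
        ((if m < j i + i ∧ j i + i ≤ n ∧ j i + i + k = j i + m then X m k
            else X (j i + i) (j i) : ℕ) : ℤ)
          - ((if m < j (i + 1) + i ∧ j (i + 1) + i ≤ n ∧ j (i + 1) + i + k = j (i + 1) + m
            then X m k else X (j (i + 1) + i) (j (i + 1)) : ℕ) : ℤ)
          ≤ (X (j i + i) (j i) : ℤ) - (X (j (i + 1) + i) (j (i + 1)) : ℤ) := by
      intro i hi
      rw [Finset.mem_range] at hi
      by_cases hPn : m < j (i + 1) + i ∧ j (i + 1) + i ≤ n ∧ j (i + 1) + i + k = j (i + 1) + m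
      · have hik : i + k = m := by omega
        have hji' : j (i + 1) < j i := hjdec i hi
        have hjk : k < j (i + 1) := by omega
        have hin2 : j i + i ≤ n := hjb i (by omega)
        have hPp : m < j i + i ∧ j i + i ≤ n ∧ j i + i + k = j i + m := ⟨by omega, hin2, by omega⟩
        rw [if_pos hPn, if_pos hPp]
        have hmono := hdiag (j (i + 1) + i) (j (i + 1)) (j i - j (i + 1))
          (by omega) (by omega) (by omega)
        have e1 : j (i + 1) + i + (j i - j (i + 1)) = j i + i := by omega
        have e2 : j (i + 1) + (j i - j (i + 1)) = j i := by omega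
        rw [e1, e2] at hmono
        have : (X (j (i + 1) + i) (j (i + 1)) : ℤ) ≤ (X (j i + i) (j i) : ℤ) := by
          exact_mod_cast hmono
        omega
      · rw [if_neg hPn]
        have h1 := hYX (j i + i) (j i)
        have h1' : ((if m < j i + i ∧ j i + i ≤ n ∧ j i + i + k = j i + m then X m k
            else X (j i + i) (j i) : ℕ) : ℤ) ≤ (X (j i + i) (j i) : ℤ) := by exact_mod_cast h1
        omega
    have hfin := hYX (j (n - k') + (n - k')) (j (n - k'))
    have hfin' : ((if m < j (n - k') + (n - k') ∧ j (n - k') + (n - k') ≤ n ∧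
          j (n - k') + (n - k') + k = j (n - k') + m then X m k
          else X (j (n - k') + (n - k')) (j (n - k')) : ℕ) : ℤ)
        ≤ (X (j (n - k') + (n - k')) (j (n - k')) : ℤ) := by exact_mod_cast hfin
    have hS := hsum k' hk'1 hk'2 j hj0 hjdec hjN
    calc _ ≤ (∑ i ∈ Finset.range (n - k'),
            ((X (j i + i) (j i) : ℤ) - (X (j (i + 1) + i) (j (i + 1)) : ℤ)))
          + (X (j (n - k') + (n - k')) (j (n - k')) : ℤ) :=
          add_le_add (Finset.sum_le_sum hterm) hfin'
      _ ≤ (k' : ℤ) := hS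
end

section
/- Let X be an (n,k) right GOGAm trapezoid. The triangular array Y of size n defined by Y_{i,j} = X_{i,j} for i−j ≤ k−1 and Y_{i,j} = 1 for n ≥ i ≥ j+k is a GOGAm triangle, and it is the minimal GOGAm triangle extending X: every GOGAm triangle Z of size n whose restriction to the k rightmost SW-NE diagonals equals X satisfies Y ≤ Z entrywise. -/
open Finset

/-- Both entries lie on the diagonal `row - column = i`. -/
def pathTerm (X : ℕ → ℕ → ℕ) (j : ℕ → ℕ) (i : ℕ) : ℤ :=
  (X (j i + i) (j i) : ℤ) - X (j (i + 1) + i) (j (i + 1))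

def pathSum (X : ℕ → ℕ → ℕ) (j : ℕ → ℕ) (m : ℕ) : ℤ :=
  ∑ i ∈ range m, pathTerm X j i + X (j m + m) (j m)

structure IsGOGAmPath (n m : ℕ) (j : ℕ → ℕ) : Prop where
  start : j 0 = n
  succ_lt : ∀ i < m, j (i + 1) < j i
  one_le_last : 1 ≤ j m

theorem isGOGAm_iff {n : ℕ} {X : ℕ → ℕ → ℕ} :
    IsGOGAm n X ↔ IsGT n X ∧ X n n ≤ n ∧
      ∀ k, 1 ≤ k → k ≤ n - 1 → ∀ j, IsGOGAmPath n (n - k) j → pathSum X j (n - k) ≤ k :=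
  and_congr_right' <| and_congr_right' <| forall₄_congr fun _ _ _ _ =>
    ⟨fun h hj => h hj.1 hj.2 hj.3, fun h h₀ h₁ h₂ => h ⟨h₀, h₁, h₂⟩⟩

namespace IsGOGAmPath

variable {n m : ℕ} {j : ℕ → ℕ}

theorem add_le_of_add_le (hj : IsGOGAmPath n m j) {i d : ℕ} (h : i + d ≤ m) :
    j (i + d) + d ≤ j i := by
  induction d with
  | zero => simp
  | succ d ih =>
    have := hj.succ_lt (i + d) (by omega)
    have := ih (by omega)
    show j (i + d + 1) + (d + 1) ≤ j i
    omega

theorem one_add_sub_le (hj : IsGOGAmPath n m j) {k : ℕ} (hkm : k ≤ m) :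
    1 + (m - k) ≤ j k := by
  have := hj.add_le_of_add_le (i := k) (d := m - k) (by omega)
  rw [Nat.add_sub_cancel' hkm] at this
  have := hj.one_le_last
  omega

theorem one_le (hj : IsGOGAmPath n m j) {i : ℕ} (h : i ≤ m) : 1 ≤ j i := by
  have := hj.one_add_sub_le h
  omega

theorem add_le (hj : IsGOGAmPath n m j) {i : ℕ} (h : i ≤ m) : j i + i ≤ n := by
  simpa [hj.start] using hj.add_le_of_add_le (i := 0) (d := i) (by omega)

end IsGOGAmPath

def descendAfter (j : ℕ → ℕ) (k : ℕ) : ℕ → ℕ :=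
  fun i => if i ≤ k then j i else j k + k - i

theorem descendAfter_of_le {j : ℕ → ℕ} {k i : ℕ} (h : i ≤ k) : descendAfter j k i = j i :=
  if_pos h

theorem descendAfter_of_ge {j : ℕ → ℕ} {k i : ℕ} (h : k ≤ i) :
    descendAfter j k i = j k + k - i := by
  unfold descendAfter
  split_ifs with h'
  · obtain rfl : i = k := le_antisymm h' h
    simp
  · rfl

theorem isGOGAmPath_descendAfter {n m k : ℕ} {j : ℕ → ℕ} (hj : IsGOGAmPath n m j)
    (hkm : k ≤ m) : IsGOGAmPath n m (descendAfter j k) where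
  start := by simp [descendAfter, hj.start]
  succ_lt i hi := by
    have := hj.one_add_sub_le hkm
    rcases le_or_gt k i with hki | hik
    · rw [descendAfter_of_ge hki, descendAfter_of_ge (hki.trans (Nat.le_succ i))]
      omega
    · rw [descendAfter_of_le hik.le, descendAfter_of_le hik]
      exact hj.succ_lt i hi
  one_le_last := by
    have := hj.one_add_sub_le hkm
    rw [descendAfter_of_ge hkm]
    omega

/-- A step of size one contributes `X (r + 1, c + 1) - X (r, c) ≥ 0`. -/
theorem IsGT.pathTerm_nonneg {n : ℕ} {X : ℕ → ℕ → ℕ} (hX : IsGT n X) {j : ℕ → ℕ} {i : ℕ}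
    (hstep : j i = j (i + 1) + 1) (hpos : 1 ≤ j (i + 1)) (hle : j i + i ≤ n) :
    0 ≤ pathTerm X j i := by
  have := (hX.2 (j (i + 1) + i) (j (i + 1)) hpos (Nat.le_add_right _ _) (by omega)).2
  rw [pathTerm, hstep, show j (i + 1) + 1 + i = j (i + 1) + i + 1 by omega]
  omega

theorem IsGT.sum_pathTerm_add_one_le {n m k : ℕ} {X : ℕ → ℕ → ℕ} (hX : IsGT n X)
    {j : ℕ → ℕ} (hj : IsGOGAmPath n m j) (hkm : k ≤ m) :
    ∑ i ∈ range k, pathTerm X j i + 1 ≤ pathSum X (descendAfter j k) m := by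
  have hj' := isGOGAmPath_descendAfter hj hkm
  have head : ∑ i ∈ range k, pathTerm X (descendAfter j k) i = ∑ i ∈ range k, pathTerm X j i :=
    sum_congr rfl fun i hi => by
      have := mem_range.1 hi
      rw [pathTerm, pathTerm, descendAfter_of_le this.le, descendAfter_of_le this]
  have tail : 0 ≤ ∑ i ∈ Ico k m, pathTerm X (descendAfter j k) i :=
    sum_nonneg fun i hi => by
      have hi := mem_Ico.1 hi
      have hpos := hj'.one_le (i := i + 1) hi.2
      refine hX.pathTerm_nonneg ?_ hpos (hj'.add_le hi.2.le)
      rw [descendAfter_of_ge (hi.1.trans (Nat.le_succ i))] at hpos ⊢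
      rw [descendAfter_of_ge hi.1]
      omega
  have last : (1 : ℤ) ≤ X (descendAfter j k m + m) (descendAfter j k m) := by
    exact_mod_cast hX.1 _ _ hj'.one_le_last (Nat.le_add_right _ _) (hj'.add_le le_rfl)
  rw [pathSum, ← sum_range_add_sum_Ico _ hkm, head]
  linarith

def trapezoidCompletion (k : ℕ) (X : ℕ → ℕ → ℕ) : ℕ → ℕ → ℕ :=
  fun i j => if i < j + k then X i j else 1

section trapezoidCompletion

variable {n k : ℕ} {X : ℕ → ℕ → ℕ}

theorem trapezoidCompletion_diag_of_lt {i : ℕ} (h : i < k) (c : ℕ) :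
    trapezoidCompletion k X (c + i) c = X (c + i) c :=
  if_pos (by omega)

theorem trapezoidCompletion_diag_of_le {i : ℕ} (h : k ≤ i) (c : ℕ) :
    trapezoidCompletion k X (c + i) c = 1 :=
  if_neg (by omega)

theorem pathTerm_trapezoidCompletion_of_lt {j : ℕ → ℕ} {i : ℕ} (h : i < k) :
    pathTerm (trapezoidCompletion k X) j i = pathTerm X j i := by
  simp only [pathTerm, trapezoidCompletion_diag_of_lt h]

theorem pathTerm_trapezoidCompletion_of_le {j : ℕ → ℕ} {i : ℕ} (h : k ≤ i) :
    pathTerm (trapezoidCompletion k X) j i = 0 := by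
  simp only [pathTerm, trapezoidCompletion_diag_of_le h, sub_self]

theorem isGT_trapezoidCompletion (hX : IsGT n X) : IsGT n (trapezoidCompletion k X) := by
  have hpos : ∀ i j, 1 ≤ j → j ≤ i → i ≤ n → 1 ≤ trapezoidCompletion k X i j := by
    intro i j h₁ h₂ h₃
    unfold trapezoidCompletion
    split_ifs
    exacts [hX.1 i j h₁ h₂ h₃, le_rfl]
  refine ⟨hpos, fun i j h₁ h₂ h₃ => ⟨?_, ?_⟩⟩
  · by_cases h : i + 1 < j + k
    · simpa [trapezoidCompletion, h, show i < j + k by omega] using (hX.2 i j h₁ h₂ h₃).1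
    · simpa [trapezoidCompletion, h] using hpos i j h₁ h₂ (by omega)
  · by_cases h : i < j + k
    · simpa [trapezoidCompletion, h, show i + 1 < j + 1 + k by omega]
        using (hX.2 i j h₁ h₂ h₃).2
    · simp [trapezoidCompletion, h, show ¬ i + 1 < j + 1 + k by omega]

/-- The dominating path of `X` is `j` itself if `m < k`, and `descendAfter j k` otherwise. -/
theorem pathSum_trapezoidCompletion_le (hX : IsGT n X) {m : ℕ} {c : ℤ}
    (hbound : ∀ j, IsGOGAmPath n m j → pathSum X j m ≤ c) {j : ℕ → ℕ}
    (hj : IsGOGAmPath n m j) : pathSum (trapezoidCompletion k X) j m ≤ c := by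
  rcases lt_or_ge m k with hmk | hkm
  · have hterms : ∀ i ∈ range m, pathTerm (trapezoidCompletion k X) j i = pathTerm X j i :=
      fun i hi => pathTerm_trapezoidCompletion_of_lt ((mem_range.1 hi).trans hmk)
    simpa only [pathSum, sum_congr rfl hterms, trapezoidCompletion_diag_of_lt hmk] using hbound j hj
  · have hsum : ∑ i ∈ range m, pathTerm (trapezoidCompletion k X) j i
        = ∑ i ∈ range k, pathTerm X j i := by
      rw [← sum_range_add_sum_Ico _ hkm,
        sum_eq_zero fun i hi => pathTerm_trapezoidCompletion_of_le (mem_Ico.1 hi).1,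
        add_zero]
      exact sum_congr rfl fun i hi => pathTerm_trapezoidCompletion_of_lt (mem_range.1 hi)
    rw [pathSum, hsum, trapezoidCompletion_diag_of_le hkm, Nat.cast_one]
    exact (hX.sum_pathTerm_add_one_le hj hkm).trans (hbound _ (isGOGAmPath_descendAfter hj hkm))

theorem isGOGAm_trapezoidCompletion (hX : IsGOGAm n X) (hk : 1 ≤ k) :
    IsGOGAm n (trapezoidCompletion k X) := by
  obtain ⟨hGT, hnn, hsum⟩ := isGOGAm_iff.1 hX
  refine isGOGAm_iff.2 ⟨isGT_trapezoidCompletion hGT, ?_, fun k' hk' hk'n j hj =>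
    pathSum_trapezoidCompletion_le hGT (hsum k' hk' hk'n) hj⟩
  simpa [trapezoidCompletion, show n < n + k by omega] using hnn

theorem trapezoidCompletion_le {Z : ℕ → ℕ → ℕ} (hZ : IsGT n Z)
    (hZX : ∀ i j, 1 ≤ j → j ≤ i → i ≤ n → i < j + k → Z i j = X i j)
    {i j : ℕ} (h₁ : 1 ≤ j) (h₂ : j ≤ i) (h₃ : i ≤ n) : trapezoidCompletion k X i j ≤ Z i j := by
  unfold trapezoidCompletion
  split_ifs with h
  exacts [(hZX i j h₁ h₂ h₃ h).ge, hZ.1 i j h₁ h₂ h₃]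

end trapezoidCompletion

section congr

variable {n : ℕ} {X Y : ℕ → ℕ → ℕ}

theorem IsGT.congr (hX : IsGT n X) (hXY : ∀ i j, 1 ≤ j → j ≤ i → i ≤ n → X i j = Y i j) :
    IsGT n Y := by
  refine ⟨fun i j h₁ h₂ h₃ => hXY i j h₁ h₂ h₃ ▸ hX.1 i j h₁ h₂ h₃, fun i j h₁ h₂ h₃ => ?_⟩
  rw [← hXY i j h₁ h₂ (by omega), ← hXY (i + 1) j h₁ (by omega) h₃,
    ← hXY (i + 1) (j + 1) (by omega) (by omega) h₃]
  exact hX.2 i j h₁ h₂ h₃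

theorem pathSum_congr (hXY : ∀ i j, 1 ≤ j → j ≤ i → i ≤ n → X i j = Y i j) {m : ℕ}
    {j : ℕ → ℕ} (hj : IsGOGAmPath n m j) : pathSum X j m = pathSum Y j m := by
  have entry : ∀ i d, i ≤ m → d ≤ i → X (j i + d) (j i) = Y (j i + d) (j i) := fun i d hi hd =>
    hXY _ _ (hj.one_le hi) (Nat.le_add_right _ _) (by have := hj.add_le hi; omega)
  refine congrArg₂ (· + ·) (sum_congr rfl fun i hi => ?_) (by rw [entry m m le_rfl le_rfl])
  have hi := mem_range.1 hi
  rw [pathTerm, pathTerm, entry i i hi.le le_rfl, entry (i + 1) i hi (Nat.le_succ i)]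

theorem IsGOGAm.congr (hX : IsGOGAm n X) (hn : 1 ≤ n)
    (hXY : ∀ i j, 1 ≤ j → j ≤ i → i ≤ n → X i j = Y i j) : IsGOGAm n Y := by
  obtain ⟨hGT, hnn, hsum⟩ := isGOGAm_iff.1 hX
  refine isGOGAm_iff.2 ⟨hGT.congr hXY, ?_, fun k hk hkn j hj => ?_⟩
  · exact hXY n n hn le_rfl le_rfl ▸ hnn
  · exact pathSum_congr hXY hj ▸ hsum k hk hkn j hj

end congr

/-- Let `X` be an `(n,k)` right GOGAm trapezoid (i.e. it agrees with some GOGAm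
triangle of size `n` on the `k` rightmost SW-NE diagonals `i - j ≤ k - 1`). Then the
triangle `Y` with `Y i j = X i j` for `i < j + k` and `Y i j = 1` for `i ≥ j + k` is
a GOGAm triangle, and it is the minimal GOGAm triangle extending `X`. -/
theorem right_gogam_trapezoid_min_completion (n k : ℕ) (hk : 1 ≤ k) (hkn : k ≤ n)
    (X : ℕ → ℕ → ℕ)
    (hX : ∃ Z, IsGOGAm n Z ∧
      ∀ i j, 1 ≤ j → j ≤ i → i ≤ n → i < j + k → X i j = Z i j) :
    IsGOGAm n (fun i j => if i < j + k then X i j else 1) ∧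
    ∀ Z : ℕ → ℕ → ℕ, IsGOGAm n Z →
      (∀ i j, 1 ≤ j → j ≤ i → i ≤ n → i < j + k → Z i j = X i j) →
      ∀ i j, 1 ≤ j → j ≤ i → i ≤ n →
        (if i < j + k then X i j else 1) ≤ Z i j := by
  obtain ⟨Z, hZ, hXZ⟩ := hX
  have hagree : ∀ i j, 1 ≤ j → j ≤ i → i ≤ n →
      trapezoidCompletion k Z i j = trapezoidCompletion k X i j := by
    intro i j h₁ h₂ h₃
    unfold trapezoidCompletion
    split_ifs with h
    exacts [(hXZ i j h₁ h₂ h₃ h).symm, rfl]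
  exact ⟨(isGOGAm_trapezoidCompletion hZ hk).congr (hk.trans hkn) hagree,
    fun Z' hZ' hZ'X i j => trapezoidCompletion_le hZ'.1 hZ'X⟩
end

section
/- Let X be an (n,k) left GOGAm trapezoid. The triangular array Y of size n defined by Y_{i,j} = X_{i,j} for j ≤ k and Y_{i,j} = X_{i−j+k,k} for n ≥ i ≥ j ≥ k (i.e., the added entries are constant on SW-NE diagonals) is a GOGAm triangle, and it is the minimal GOGAm triangle extending X: every GOGAm triangle Z of size n whose restriction to the k leftmost NW-SE diagonals equals X satisfies Y ≤ Z entrywise. -/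
lemma gt_diag {n : ℕ} {Z : ℕ → ℕ → ℕ} (h : IsGT n Z) :
    ∀ d r c, 1 ≤ c → c ≤ r → r + d ≤ n → Z r c ≤ Z (r + d) (c + d) := by
  intro d
  induction d with
  | zero => intro r c _ _ _; simp
  | succ d ih =>
    intro r c h1 h2 h3
    have h4 := (h.2 r c h1 h2 (by omega)).2
    have h5 := ih (r + 1) (c + 1) (by omega) (by omega) (by omega)
    have e1 : r + 1 + d = r + (d + 1) := by omega
    have e2 : c + 1 + d = c + (d + 1) := by omega
    rw [e1, e2] at h5
    exact le_trans h4 h5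

lemma gt_col {n : ℕ} {Z : ℕ → ℕ → ℕ} (h : IsGT n Z) :
    ∀ d r c, 1 ≤ c → c ≤ r → r + d ≤ n → Z (r + d) c ≤ Z r c := by
  intro d
  induction d with
  | zero => intro r c _ _ _; simp
  | succ d ih =>
    intro r c h1 h2 h3
    have h4 := (h.2 r c h1 h2 (by omega)).1
    have h5 := ih (r + 1) c h1 (by omega) (by omega)
    have e1 : r + 1 + d = r + (d + 1) := by omega
    rw [e1] at h5
    exact le_trans h5 h4

/-- Let `X` be an `(n,k)` left GOGAm trapezoid (i.e. it agrees with some GOGAm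
triangle of size `n` on the `k` leftmost NW-SE diagonals `j ≤ k`). Then the triangle
`Y` with `Y i j = X i j` for `j ≤ k` and `Y i j = X (i - j + k) k` for `j ≥ k`
(the added entries are constant on SW-NE diagonals) is a GOGAm triangle, and it is
the minimal GOGAm triangle extending `X`. -/
theorem left_gogam_trapezoid_min_completion (n k : ℕ) (hk : 1 ≤ k) (hkn : k ≤ n)
    (X : ℕ → ℕ → ℕ)
    (hX : ∃ Z, IsGOGAm n Z ∧
      ∀ i j, 1 ≤ j → j ≤ i → i ≤ n → j ≤ k → X i j = Z i j) :
    IsGOGAm n (fun i j => if j ≤ k then X i j else X (i - (j - k)) k) ∧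
    ∀ Z : ℕ → ℕ → ℕ, IsGOGAm n Z →
      (∀ i j, 1 ≤ j → j ≤ i → i ≤ n → j ≤ k → Z i j = X i j) →
      ∀ i j, 1 ≤ j → j ≤ i → i ≤ n →
        (if j ≤ k then X i j else X (i - (j - k)) k) ≤ Z i j := by
  obtain ⟨Z, ⟨hZgt, hZnn, hZsum⟩, hXZ⟩ := hX
  -- key value lemmas for Y
  have hY1 : ∀ r c, 1 ≤ c → c ≤ r → r ≤ n → c ≤ k →
      (if c ≤ k then X r c else X (r - (c - k)) k) = Z r c := by
    intro r c h1 h2 h3 h4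
    rw [if_pos h4]; exact hXZ r c h1 h2 h3 h4
  have hY2 : ∀ c d, k ≤ c → c + d ≤ n →
      (if c ≤ k then X (c + d) c else X (c + d - (c - k)) k) = Z (k + d) k := by
    intro c d h1 h2
    by_cases h : c ≤ k
    · have hc : c = k := le_antisymm h h1
      rw [if_pos h, hc]
      exact hXZ (k + d) k hk (by omega) (by omega) (le_refl k)
    · rw [if_neg h]
      have e : c + d - (c - k) = k + d := by omega
      rw [e]
      exact hXZ (k + d) k hk (by omega) (by omega) (le_refl k)
  refine ⟨⟨⟨?_, ?_⟩, ?_, ?_⟩, ?_⟩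
  · -- positivity
    intro i j h1 h2 h3
    by_cases h : j ≤ k
    · simp only [if_pos h]
      rw [hXZ i j h1 h2 h3 h]
      exact hZgt.1 i j h1 h2 h3
    · simp only [if_neg h]
      rw [hXZ (i - (j - k)) k hk (by omega) (by omega) (le_refl k)]
      exact hZgt.1 _ k hk (by omega) (by omega)
  · -- GT inequalities
    intro i j h1 h2 h3
    constructor
    · by_cases h : j ≤ k
      · simp only [if_pos h]
        rw [hXZ (i + 1) j h1 (by omega) h3 h, hXZ i j h1 h2 (by omega) h]
        exact (hZgt.2 i j h1 h2 h3).1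
      · simp only [if_neg h]
        have e : i + 1 - (j - k) = (i - (j - k)) + 1 := by omega
        rw [e, hXZ ((i - (j - k)) + 1) k hk (by omega) (by omega) (le_refl k),
          hXZ (i - (j - k)) k hk (by omega) (by omega) (le_refl k)]
        exact (hZgt.2 (i - (j - k)) k hk (by omega) (by omega)).1
    · by_cases h : j + 1 ≤ k
      · simp only [if_pos h, if_pos (by omega : j ≤ k)]
        rw [hXZ (i + 1) (j + 1) (by omega) (by omega) h3 h,
          hXZ i j h1 h2 (by omega) (by omega)]
        exact (hZgt.2 i j h1 h2 h3).2
      · by_cases h' : j ≤ k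
        · have hjk : j = k := by omega
          simp only [if_pos h', if_neg h]
          have e : i + 1 - (j + 1 - k) = i := by omega
          rw [e, hjk]
        · simp only [if_neg h, if_neg h']
          have e : i + 1 - (j + 1 - k) = i - (j - k) := by omega
          rw [e]
  · -- Y n n ≤ n
    by_cases h : n ≤ k
    · simp only [if_pos h]
      have hnk : n = k := le_antisymm (le_trans h (le_refl k)) hkn
      rw [hXZ n n (by omega) (le_refl n) (le_refl n) h]
      exact hZnn
    · simp only [if_neg h]
      have e : n - (n - k) = k := by omega
      rw [e, hXZ k k hk (le_refl k) hkn (le_refl k)]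
      have := gt_diag hZgt (n - k) k k hk (le_refl k) (by omega)
      have e2 : k + (n - k) = n := by omega
      rw [e2] at this
      exact le_trans this hZnn
  · -- GOGAm sum inequalities
    intro m hm1 hm2 j hj0 hjdec hjL
    set L := n - m with hL
    have hseq : ∀ s a, a + s ≤ L → j (a + s) + s ≤ j a := by
      intro s
      induction s with
      | zero => intro a _; simp
      | succ s ih =>
        intro a ha
        have h1 := ih (a + 1) (by omega)
        have e : a + 1 + s = a + (s + 1) := by omega
        rw [e] at h1
        have h2 := hjdec a (by omega)
        omega
    have hjle : ∀ i, i ≤ L → j i + i ≤ n := by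
      intro i hi
      have := hseq i 0 (by omega)
      simp at this
      omega
    have hjpos : ∀ i, i ≤ L → 1 ≤ j i := by
      intro i hi
      have := hseq (L - i) i (by omega)
      have e : i + (L - i) = L := by omega
      rw [e] at this
      omega
    set J : ℕ → ℕ := fun i => if k ≤ j i then n - i else j i with hJ
    have hJ0 : J 0 = n := by
      simp only [hJ, hj0, if_pos hkn]
      omega
    have hJdec : ∀ i, i < L → J (i + 1) < J i := by
      intro i hi
      have hd := hjdec i hi
      have h1 := hjle i (by omega)
      have h2 := hjle (i + 1) (by omega)
      simp only [hJ]
      by_cases ha : k ≤ j i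
      · by_cases hb : k ≤ j (i + 1)
        · rw [if_pos ha, if_pos hb]; omega
        · rw [if_pos ha, if_neg hb]; omega
      · have hb : ¬ k ≤ j (i + 1) := by omega
        rw [if_neg ha, if_neg hb]; omega
    have hJL : 1 ≤ J L := by
      have h1 := hjle L (le_refl L)
      simp only [hJ]
      by_cases ha : k ≤ j L
      · rw [if_pos ha]; omega
      · rw [if_neg ha]; exact hjL
    have hsum := hZsum m hm1 hm2 J hJ0 hJdec hJL
    rw [← hL] at hsum
    have key : (∑ i ∈ Finset.range L,
          ((((if j i ≤ k then X (j i + i) (j i) else X (j i + i - (j i - k)) k : ℕ)) : ℤ)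
            - (((if j (i+1) ≤ k then X (j (i+1) + i) (j (i+1))
                else X (j (i+1) + i - (j (i+1) - k)) k : ℕ)) : ℤ)))
        + (((if j L ≤ k then X (j L + L) (j L) else X (j L + L - (j L - k)) k : ℕ)) : ℤ)
        ≤ (∑ i ∈ Finset.range L,
          ((Z (J i + i) (J i) : ℤ) - (Z (J (i+1) + i) (J (i+1)) : ℤ)))
        + (Z (J L + L) (J L) : ℤ) := by
      refine add_le_add (Finset.sum_le_sum ?_) ?_
      · intro i hi
        rw [Finset.mem_range] at hi
        have hd := hjdec i hi
        have hp := hjle i (by omega)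
        have hq := hjle (i + 1) (by omega)
        have hq' : j (i + 1) + i ≤ n := by omega
        have hqpos := hjpos (i + 1) (by omega)
        have hppos := hjpos i (by omega)
        by_cases ha : k ≤ j i
        · have hJi : J i = n - i := by simp only [hJ]; rw [if_pos ha]
          have hkin : k + i ≤ n := by omega
          have hA : (if j i ≤ k then X (j i + i) (j i) else X (j i + i - (j i - k)) k)
              = Z (k + i) k := hY2 (j i) i ha hp
          have hZa : Z (k + i) k ≤ Z (J i + i) (J i) := by
            have := gt_diag hZgt (n - i - k) (k + i) k hk (by omega) (by omega)
            have e1 : k + i + (n - i - k) = n := by omega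
            have e2 : k + (n - i - k) = n - i := by omega
            rw [e1, e2] at this
            rw [hJi]
            have e3 : n - i + i = n := by omega
            rw [e3]
            exact this
          by_cases hb : k ≤ j (i + 1)
          · have hJi1 : J (i + 1) = n - (i + 1) := by simp only [hJ]; rw [if_pos hb]
            have hB : (if j (i+1) ≤ k then X (j (i+1) + i) (j (i+1))
                else X (j (i+1) + i - (j (i+1) - k)) k) = Z (k + i) k :=
              hY2 (j (i + 1)) i hb hq'
            have hZb : Z (J (i + 1) + i) (J (i + 1)) ≤ Z (J i + i) (J i) := by
              have hle : i + 2 ≤ n := by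
                have : j (i + 1) + (i + 1) ≤ n := hq
                omega
              have := (hZgt.2 (n - 1) (n - (i + 1)) (by omega) (by omega) (by omega)).2
              have e1 : n - 1 + 1 = n := by omega
              have e2 : n - (i + 1) + 1 = n - i := by omega
              rw [e1, e2] at this
              have e3 : J (i + 1) + i = n - 1 := by omega
              have e4 : J i + i = n := by omega
              rw [e3, e4, hJi1, hJi]
              exact this
            rw [hA, hB]
            omega
          · have hJi1 : J (i + 1) = j (i + 1) := by simp only [hJ]; rw [if_neg hb]
            have hB : (if j (i+1) ≤ k then X (j (i+1) + i) (j (i+1))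
                else X (j (i+1) + i - (j (i+1) - k)) k) = Z (j (i+1) + i) (j (i+1)) :=
              hY1 (j (i+1) + i) (j (i+1)) hqpos (by omega) hq' (by omega)
            rw [hA, hB, hJi1, hJi]
            have e3 : n - i + i = n := by omega
            rw [e3]
            have h0 : Z (k + i) k ≤ Z n (n - i) := by
              have := gt_diag hZgt (n - i - k) (k + i) k hk (by omega) (by omega)
              have e1 : k + i + (n - i - k) = n := by omega
              have e2 : k + (n - i - k) = n - i := by omega
              rwa [e1, e2] at this
            omega
        · have hb : ¬ k ≤ j (i + 1) := by omega
          have hJi : J i = j i := by simp only [hJ]; rw [if_neg ha]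
          have hJi1 : J (i + 1) = j (i + 1) := by simp only [hJ]; rw [if_neg hb]
          have hA : (if j i ≤ k then X (j i + i) (j i) else X (j i + i - (j i - k)) k)
              = Z (j i + i) (j i) :=
            hY1 (j i + i) (j i) hppos (by omega) hp (by omega)
          have hB : (if j (i+1) ≤ k then X (j (i+1) + i) (j (i+1))
              else X (j (i+1) + i - (j (i+1) - k)) k) = Z (j (i+1) + i) (j (i+1)) :=
            hY1 (j (i+1) + i) (j (i+1)) hqpos (by omega) hq' (by omega)
          rw [hA, hB, hJi, hJi1]
      · have hr := hjle L (le_refl L)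
        have hrpos := hjpos L (le_refl L)
        by_cases ha : k ≤ j L
        · have hJi : J L = n - L := by simp only [hJ]; rw [if_pos ha]
          have hA : (if j L ≤ k then X (j L + L) (j L) else X (j L + L - (j L - k)) k)
              = Z (k + L) k := hY2 (j L) L ha hr
          rw [hA, hJi]
          have e3 : n - L + L = n := by omega
          rw [e3]
          have h0 : Z (k + L) k ≤ Z n (n - L) := by
            have := gt_diag hZgt (n - L - k) (k + L) k hk (by omega) (by omega)
            have e1 : k + L + (n - L - k) = n := by omega
            have e2 : k + (n - L - k) = n - L := by omega
            rwa [e1, e2] at this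
          exact_mod_cast h0
        · have hJi : J L = j L := by simp only [hJ]; rw [if_neg ha]
          have hA : (if j L ≤ k then X (j L + L) (j L) else X (j L + L - (j L - k)) k)
              = Z (j L + L) (j L) :=
            hY1 (j L + L) (j L) hrpos (by omega) hr (by omega)
          rw [hA, hJi]
    exact le_trans key hsum
  · -- minimality
    intro W hW hWX i j h1 h2 h3
    by_cases h : j ≤ k
    · rw [if_pos h, ← hWX i j h1 h2 h3 h]
    · rw [if_neg h]
      rw [← hWX (i - (j - k)) k hk (by omega) (by omega) (le_refl k)]
      have := gt_diag hW.1 (j - k) (i - (j - k)) k hk (by omega) (by omega)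
      have e1 : i - (j - k) + (j - k) = i := by omega
      have e2 : k + (j - k) = j := by omega
      rwa [e1, e2] at this
end

section
/- Let X = (X_{i,j}) with n ≥ i ≥ j ≥ 1, j ≤ 2, be an array of positive integers satisfying the Gelfand-Tsetlin inequalities (X_{i+1,j} ≤ X_{i,j} ≤ X_{i+1,j+1} whenever all three entries are defined). Then X is an (n,2) left GOGAm trapezoid (i.e., extends to a GOGAm triangle of size n) if and only if, for all 2 ≤ i ≤ n: X_{i,2} ≤ n−i+2 and X_{i,2} − X_{i−1,1} + X_{i,1} ≤ n−i+1. -/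
/-- Going up-right along a NE diagonal in a GT triangle increases values. -/
lemma gt_diag_chain {n : ℕ} {Z : ℕ → ℕ → ℕ} (h : IsGT n Z) :
    ∀ s a b, 1 ≤ b → b ≤ a → a + s ≤ n → Z a b ≤ Z (a + s) (b + s) := by
  intro s
  induction s with
  | zero => intro a b _ _ _; simp
  | succ s ih =>
    intro a b hb hba hs
    calc Z a b ≤ Z (a + s) (b + s) := ih a b hb hba (by omega)
      _ ≤ Z (a + s + 1) (b + s + 1) :=
        (h.2 (a + s) (b + s) (by omega) (by omega) (by omega)).2
      _ = Z (a + (s + 1)) (b + (s + 1)) := by ring_nf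

/-- Characterization of `(n,2)` left GOGAm trapezoids: an array `X i j`
(`n ≥ i ≥ j ≥ 1`, `j ≤ 2`) of positive integers satisfying the Gelfand-Tsetlin
inequalities extends to a GOGAm triangle of size `n` if and only if, for all
`2 ≤ i ≤ n`, `X i 2 ≤ n - i + 2` and `X i 2 - X (i-1) 1 + X i 1 ≤ n - i + 1`. -/
theorem left_gogam_trapezoid_width2_characterization (n : ℕ) (hn : 2 ≤ n)
    (X : ℕ → ℕ → ℕ)
    (hpos : ∀ i j, 1 ≤ j → j ≤ i → i ≤ n → j ≤ 2 → 1 ≤ X i j)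
    (hGT1 : ∀ i, 1 ≤ i → i + 1 ≤ n → X (i + 1) 1 ≤ X i 1 ∧ X i 1 ≤ X (i + 1) 2)
    (hGT2 : ∀ i, 2 ≤ i → i + 1 ≤ n → X (i + 1) 2 ≤ X i 2) :
    (∃ Z, IsGOGAm n Z ∧ ∀ i j, 1 ≤ j → j ≤ i → i ≤ n → j ≤ 2 → X i j = Z i j) ↔
    (∀ i, 2 ≤ i → i ≤ n →
      (X i 2 : ℤ) ≤ (n : ℤ) - i + 2 ∧
      (X i 2 : ℤ) - X (i - 1) 1 + X i 1 ≤ (n : ℤ) - i + 1) := by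
  constructor
  · rintro ⟨Z, ⟨hZGT, hZnn, hZsum⟩, hag⟩
    have chain := gt_diag_chain hZGT
    intro i hi2 hin
    have hXZ2 : X i 2 = Z i 2 := hag i 2 (by omega) hi2 hin le_rfl
    constructor
    · -- X i 2 ≤ n - i + 2
      rcases eq_or_lt_of_le hi2 with h2 | h3
      · -- i = 2 : use the chain up to Z n n ≤ n
        have hch : Z 2 2 ≤ Z n n := by
          have := chain (n - 2) 2 2 one_le_two le_rfl (by omega)
          rwa [show 2 + (n - 2) = n by omega] at this
        have : X i 2 ≤ n := by rw [hXZ2, ← h2]; exact le_trans hch hZnn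
        have : (X i 2 : ℤ) ≤ (n : ℤ) := by exact_mod_cast this
        omega
      · -- i ≥ 3
        set k := n - i + 2 with hk
        have hm : n - k = i - 2 := by omega
        set j : ℕ → ℕ := fun t => if t < i - 2 then n - t else 2 with hj
        have hj0 : j 0 = n := by simp [hj]; omega
        have hjm : j (i - 2) = 2 := by simp [hj]
        have hdec : ∀ t, t < n - k → j (t + 1) < j t := by
          intro t ht
          rw [hm] at ht
          have hjt : j t = n - t := by simp [hj, ht]
          by_cases h1 : t + 1 < i - 2
          · have : j (t + 1) = n - (t + 1) := by simp [hj, h1]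
            omega
          · have : j (t + 1) = 2 := by simp [hj, h1]
            omega
        have H := hZsum k (by omega) (by omega) j hj0 hdec (by rw [hm, hjm]; omega)
        rw [hm, hjm] at H
        have hS : 0 ≤ ∑ t ∈ Finset.range (i - 2),
            ((Z (j t + t) (j t) : ℤ) - (Z (j (t + 1) + t) (j (t + 1)) : ℤ)) := by
          apply Finset.sum_nonneg
          intro t ht
          rw [Finset.mem_range] at ht
          have hjt : j t = n - t := by simp [hj, ht]
          rw [sub_nonneg]
          by_cases h1 : t + 1 < i - 2
          · have hjt1 : j (t + 1) = n - (t + 1) := by simp [hj, h1]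
            rw [hjt, hjt1, show n - t + t = n by omega,
              show n - (t + 1) + t = n - 1 by omega]
            have h' := (hZGT.2 (n - 1) (n - (t + 1)) (by omega) (by omega) (by omega)).2
            rw [show n - 1 + 1 = n by omega, show n - (t + 1) + 1 = n - t by omega] at h'
            exact_mod_cast h'
          · have hjt1 : j (t + 1) = 2 := by simp [hj, h1]
            rw [hjt, hjt1, show n - t + t = n by omega]
            have h' := chain (n - t - 2) (2 + t) 2 one_le_two (by omega) (by omega)
            rw [show 2 + t + (n - t - 2) = n by omega,
              show 2 + (n - t - 2) = n - t by omega] at h'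
            exact_mod_cast h'
        rw [show 2 + (i - 2) = i by omega] at H
        rw [hXZ2]
        have hki : (k : ℤ) = (n : ℤ) - i + 2 := by
          rw [hk]; push_cast; omega
        linarith
    · -- X i 2 - X (i-1) 1 + X i 1 ≤ n - i + 1
      set k := n - i + 1 with hk
      have hm : n - k = i - 1 := by omega
      set j : ℕ → ℕ := fun t => if t < i - 1 then n - t else 1 with hj
      have hj0 : j 0 = n := by simp [hj]; omega
      have hjm : j (i - 1) = 1 := by simp [hj]
      have hdec : ∀ t, t < n - k → j (t + 1) < j t := by
        intro t ht
        rw [hm] at ht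
        have hjt : j t = n - t := by simp [hj, ht]
        by_cases h1 : t + 1 < i - 1
        · have : j (t + 1) = n - (t + 1) := by simp [hj, h1]
          omega
        · have : j (t + 1) = 1 := by simp [hj, h1]
          omega
      have H := hZsum k (by omega) (by omega) j hj0 hdec (by rw [hm, hjm])
      rw [hm, hjm] at H
      rw [show i - 1 = (i - 2) + 1 by omega, Finset.sum_range_succ] at H
      have hS : 0 ≤ ∑ t ∈ Finset.range (i - 2),
          ((Z (j t + t) (j t) : ℤ) - (Z (j (t + 1) + t) (j (t + 1)) : ℤ)) := by
        apply Finset.sum_nonneg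
        intro t ht
        rw [Finset.mem_range] at ht
        have hjt : j t = n - t := by simp [hj, show t < i - 1 by omega]
        have hjt1 : j (t + 1) = n - (t + 1) := by simp [hj, show t + 1 < i - 1 by omega]
        rw [sub_nonneg, hjt, hjt1, show n - t + t = n by omega,
          show n - (t + 1) + t = n - 1 by omega]
        have h' := (hZGT.2 (n - 1) (n - (t + 1)) (by omega) (by omega) (by omega)).2
        rw [show n - 1 + 1 = n by omega, show n - (t + 1) + 1 = n - t by omega] at h'
        exact_mod_cast h'
      -- evaluate the last summand and the final term
      have hjm2 : j (i - 2) = n - (i - 2) := by simp [hj, show i - 2 < i - 1 by omega]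
      rw [show (i - 2) + 1 = i - 1 by omega] at H
      rw [hjm, hjm2] at H
      rw [show n - (i - 2) + (i - 2) = n by omega, show 1 + (i - 2) = i - 1 by omega,
        show 1 + (i - 1) = i by omega] at H
      -- H : S + (Z n (n - (i-2)) - Z (i-1) 1) + Z i 1 ≤ k
      have hZup : Z i 2 ≤ Z n (n - (i - 2)) := by
        have h' := chain (n - i) i 2 (by omega) (by omega) (by omega)
        rwa [show i + (n - i) = n by omega, show 2 + (n - i) = n - (i - 2) by omega] at h'
      have hXZ1 : X i 1 = Z i 1 := hag i 1 le_rfl (by omega) hin (by omega)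
      have hXZ1' : X (i - 1) 1 = Z (i - 1) 1 :=
        hag (i - 1) 1 le_rfl (by omega) (by omega) (by omega)
      have hki : (k : ℤ) = (n : ℤ) - i + 1 := by
        rw [hk]; push_cast; omega
      have hZup' : (Z i 2 : ℤ) ≤ (Z n (n - (i - 2)) : ℤ) := by exact_mod_cast hZup
      rw [hXZ2, hXZ1, hXZ1']
      linarith
  · -- backward: construct the extension
    intro hbd
    set Z : ℕ → ℕ → ℕ := fun a b => if b ≤ 2 then X a b else X (a - b + 2) 2 with hZ
    have hdiag : ∀ t b, 2 ≤ b → Z (b + t) b = X (t + 2) 2 := by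
      intro t b hb
      rcases eq_or_lt_of_le hb with h | h
      · rw [hZ]; simp [← h, show 2 + t = t + 2 by omega]
      · rw [hZ]; simp [show ¬ b ≤ 2 by omega, show b + t - b + 2 = t + 2 by omega]
    have hX22 : X 2 2 ≤ n := by
      have h := (hbd 2 le_rfl hn).1
      have : (X 2 2 : ℤ) ≤ (n : ℤ) := by push_cast at h; linarith
      exact_mod_cast this
    have hZGT : IsGT n Z := by
      constructor
      · intro a b hb hba han
        by_cases h2 : b ≤ 2
        · rw [hZ]; simpa [h2] using hpos a b hb hba han h2
        · rw [hZ]; simp only [h2, if_false]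
          exact hpos (a - b + 2) 2 (by omega) (by omega) (by omega) le_rfl
      · intro a b hb hba hn1
        by_cases h1 : b = 1
        · subst h1
          have := hGT1 a hba hn1
          rw [hZ]; simpa using this
        · by_cases h2 : b = 2
          · subst h2
            constructor
            · rw [hZ]; simpa using hGT2 a hba hn1
            · rw [hZ]
              simp only [le_refl, if_pos, show ¬ (2+1 : ℕ) ≤ 2 by omega, if_false,
                show a + 1 - (2 + 1) + 2 = a by omega]
          · have hb3 : 3 ≤ b := by omega
            constructor
            · rw [hZ]
              simp only [show ¬ b ≤ 2 by omega, if_false]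
              have h' := hGT2 (a - b + 2) (by omega) (by omega)
              rwa [show a - b + 2 + 1 = a + 1 - b + 2 by omega] at h'
            · rw [hZ]
              simp only [show ¬ b ≤ 2 by omega, show ¬ b + 1 ≤ 2 by omega, if_false,
                show a + 1 - (b + 1) + 2 = a - b + 2 by omega]
              exact le_rfl
    refine ⟨Z, ⟨hZGT, ?_, ?_⟩, ?_⟩
    · -- Z n n ≤ n
      by_cases h2 : n ≤ 2
      · have : n = 2 := by omega
        rw [hZ]; simpa [this] using hX22
      · rw [hZ]; simpa [h2, show n - n + 2 = 2 by omega] using hX22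
    · -- the GOGAm inequalities
      intro k hk1 hk2 j hj0 hjdec hjlast
      have hmn : 1 ≤ n - k := by omega
      -- upper bound on j
      have hjub : ∀ t, t ≤ n - k → j t ≤ n - t := by
        intro t
        induction t with
        | zero => intro _; simp [hj0]
        | succ t ih =>
          intro ht
          have h1 := hjdec t (by omega)
          have h2 := ih (by omega)
          omega
      -- monotonicity of j
      have hjmono : ∀ d t, t + d ≤ n - k → j (t + d) ≤ j t := by
        intro d
        induction d with
        | zero => intro t _; simp
        | succ d ih =>
          intro t ht
          have h1 := hjdec (t + d) (by omega)
          have h2 := ih t (by omega)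
          rw [show t + (d + 1) = t + d + 1 from by omega]
          omega
      have hjge : ∀ t, t ≤ n - k → j (n - k) ≤ j t := by
        intro t ht
        have := hjmono (n - k - t) t (by omega)
        rwa [show t + (n - k - t) = n - k by omega] at this
      by_cases hA : 2 ≤ j (n - k)
      · -- all diagonals ≥ 2 : sum telescopes to the single entry X (n-k+2) 2
        have hk2' : 2 ≤ k := by
          have := hjub (n - k) le_rfl
          omega
        have hsum0 : ∑ t ∈ Finset.range (n - k),
            ((Z (j t + t) (j t) : ℤ) - (Z (j (t + 1) + t) (j (t + 1)) : ℤ)) = 0 := by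
          apply Finset.sum_eq_zero
          intro t ht
          rw [Finset.mem_range] at ht
          have h1 : 2 ≤ j t := le_trans hA (hjge t (by omega))
          have h2 : 2 ≤ j (t + 1) := le_trans hA (hjge (t + 1) (by omega))
          rw [hdiag t (j t) h1, hdiag t (j (t + 1)) h2, sub_self]
        rw [hsum0, hdiag (n - k) (j (n - k)) hA, zero_add]
        have h' := (hbd (n - k + 2) (by omega) (by omega)).1
        have e1 : ((n - k + 2 : ℕ) : ℤ) = (n : ℤ) - k + 2 := by push_cast; omega
        have e2 : ((k : ℕ) : ℤ) = (n : ℤ) - ((n : ℤ) - k + 2) + 2 := by omega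
        rw [e1] at h'
        omega
      · -- last diagonal is 1
        have hjm1 : j (n - k) = 1 := by omega
        have hge2 : ∀ t, t < n - k → 2 ≤ j t := by
          intro t ht
          have h1 := hjmono (n - k - t - 1) (t + 1) (by omega)
          rw [show t + 1 + (n - k - t - 1) = n - k by omega] at h1
          have h2 := hjdec t ht
          omega
        rw [show n - k = (n - k - 1) + 1 by omega, Finset.sum_range_succ]
        have hsum0 : ∑ t ∈ Finset.range (n - k - 1),
            ((Z (j t + t) (j t) : ℤ) - (Z (j (t + 1) + t) (j (t + 1)) : ℤ)) = 0 := by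
          apply Finset.sum_eq_zero
          intro t ht
          rw [Finset.mem_range] at ht
          have h1 : 2 ≤ j t := hge2 t (by omega)
          have h2 : 2 ≤ j (t + 1) := hge2 (t + 1) (by omega)
          rw [hdiag t (j t) h1, hdiag t (j (t + 1)) h2, sub_self]
        rw [hsum0, zero_add]
        have e0 : n - k - 1 + 1 = n - k := by omega
        rw [e0, hjm1]
        have h1 : 2 ≤ j (n - k - 1) := hge2 (n - k - 1) (by omega)
        rw [hdiag (n - k - 1) (j (n - k - 1)) h1]
        have eZ1 : Z (1 + (n - k - 1)) 1 = X (n - k) 1 := by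
          rw [hZ]; simp [show (1 : ℕ) ≤ 2 by omega, show 1 + (n - k - 1) = n - k by omega]
        have eZ2 : Z (1 + (n - k)) 1 = X (n - k + 1) 1 := by
          rw [hZ]; simp [show 1 + (n - k) = n - k + 1 by omega]
        rw [eZ1, eZ2]
        have h' := (hbd (n - k + 1) (by omega) (by omega)).2
        rw [show n - k + 1 - 1 = n - k by omega] at h'
        have e1 : ((n - k + 1 : ℕ) : ℤ) = (n : ℤ) - k + 1 := by push_cast; omega
        have e2 : ((n - k + 2 : ℕ) : ℤ) = (n : ℤ) - k + 2 := by push_cast; omega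
        have e3 : ((n - k - 1 + 2 : ℕ) : ℤ) = (n : ℤ) - k + 1 := by push_cast; omega
        rw [e1] at h'
        have : ((X (n - k - 1 + 2) 2 : ℕ) : ℤ) = ((X (n - k + 1) 2 : ℕ) : ℤ) := by
          norm_cast
          rw [show n - k - 1 + 2 = n - k + 1 by omega]
        rw [this]
        omega
    · -- agreement on the trapezoid
      intro a b hb hba han hb2
      rw [hZ]; simp [hb2]
end

section
/- Let n, k, l satisfy k + l ≤ n + 1 and let X be an (n,k,l) Gog rectangle. Then there exists a minimal Gog triangle of size n extending X: a Gog triangle Y whose restriction to the entries with j ≤ k and i−j ≤ l−1 equals X, such that every Gog triangle Z of size n extending X satisfies Y ≤ Z entrywise. -/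
/-- Let `k + l ≤ n + 1` and let `X` be an `(n,k,l)` Gog rectangle (i.e. it agrees
with some Gog triangle of size `n` on the intersection of the `k` leftmost NW-SE
diagonals `j ≤ k` and the `l` rightmost SW-NE diagonals `i - j ≤ l - 1`). Then there
exists a minimal Gog triangle of size `n` extending `X`. -/
theorem gog_rectangle_min_completion (n k l : ℕ) (hk : 1 ≤ k) (hl : 1 ≤ l)
    (hkl : k + l ≤ n + 1) (X : ℕ → ℕ → ℕ)
    (hX : ∃ Z, IsGog n Z ∧
      ∀ i j, 1 ≤ j → j ≤ i → i ≤ n → j ≤ k → i < j + l → X i j = Z i j) :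
    ∃ Y, IsGog n Y ∧
      (∀ i j, 1 ≤ j → j ≤ i → i ≤ n → j ≤ k → i < j + l → Y i j = X i j) ∧
      ∀ Z : ℕ → ℕ → ℕ, IsGog n Z →
        (∀ i j, 1 ≤ j → j ≤ i → i ≤ n → j ≤ k → i < j + l → Z i j = X i j) →
        ∀ i j, 1 ≤ j → j ≤ i → i ≤ n → Y i j ≤ Z i j := by
  obtain ⟨Z0, hZ0, hZ0X⟩ := hX
  set Ext : (ℕ → ℕ → ℕ) → Prop := fun Z => IsGog n Z ∧
      ∀ i j, 1 ≤ j → j ≤ i → i ≤ n → j ≤ k → i < j + l → Z i j = X i j with hExtDef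
  have hExt0 : Ext Z0 := ⟨hZ0, fun i j h1 h2 h3 h4 h5 => (hZ0X i j h1 h2 h3 h4 h5).symm⟩
  -- closure under pointwise min
  have hmin : ∀ Z1 Z2, Ext Z1 → Ext Z2 → Ext (fun i j => min (Z1 i j) (Z2 i j)) := by
    rintro Z1 Z2 ⟨⟨⟨h1pos, h1gt⟩, h1row, h1top⟩, h1X⟩ ⟨⟨⟨h2pos, h2gt⟩, h2row, h2top⟩, h2X⟩
    refine ⟨⟨⟨?_, ?_⟩, ?_, ?_⟩, ?_⟩
    · intro i j a b c; exact le_min (h1pos i j a b c) (h2pos i j a b c)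
    · intro i j a b c
      exact ⟨min_le_min (h1gt i j a b c).1 (h2gt i j a b c).1,
        min_le_min (h1gt i j a b c).2 (h2gt i j a b c).2⟩
    · intro i j a b c
      exact lt_min (lt_of_le_of_lt (min_le_left _ _) (h1row i j a b c))
        (lt_of_le_of_lt (min_le_right _ _) (h2row i j a b c))
    · intro j a b; simp [h1top j a b, h2top j a b]
    · intro i j a b c d e; simp [h1X i j a b c d e, h2X i j a b c d e]
  set Y : ℕ → ℕ → ℕ := fun i j => sInf {m | ∃ Z, Ext Z ∧ Z i j = m} with hYdef
  have hmem : ∀ i j, ∃ Z, Ext Z ∧ Z i j = Y i j := fun i j =>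
    Nat.sInf_mem (⟨Z0 i j, Z0, hExt0, rfl⟩ : {m | ∃ Z, Ext Z ∧ Z i j = m}.Nonempty)
  have hle : ∀ Z, Ext Z → ∀ i j, Y i j ≤ Z i j := fun Z hZ i j => Nat.sInf_le ⟨Z, hZ, rfl⟩
  -- two-point achiever
  have h2pt : ∀ i j i' j', ∃ W, Ext W ∧ W i j = Y i j ∧ W i' j' = Y i' j' := by
    intro i j i' j'
    obtain ⟨Z1, hZ1, e1⟩ := hmem i j
    obtain ⟨Z2, hZ2, e2⟩ := hmem i' j'
    refine ⟨_, hmin Z1 Z2 hZ1 hZ2, ?_, ?_⟩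
    · have h := hle Z2 hZ2 i j
      show min (Z1 i j) (Z2 i j) = Y i j
      omega
    · have h := hle Z1 hZ1 i' j'
      show min (Z1 i' j') (Z2 i' j') = Y i' j'
      omega
  refine ⟨Y, ⟨⟨?_, ?_⟩, ?_, ?_⟩, ?_, ?_⟩
  · intro i j a b c
    obtain ⟨Z, ⟨⟨⟨hpos, _⟩, _, _⟩, _⟩, e⟩ := hmem i j
    exact e ▸ hpos i j a b c
  · intro i j a b c
    constructor
    · obtain ⟨W, ⟨⟨⟨_, hgt⟩, _, _⟩, _⟩, e1, e2⟩ := h2pt (i + 1) j i j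
      exact e1 ▸ e2 ▸ (hgt i j a b c).1
    · obtain ⟨W, ⟨⟨⟨_, hgt⟩, _, _⟩, _⟩, e1, e2⟩ := h2pt i j (i + 1) (j + 1)
      exact e1 ▸ e2 ▸ (hgt i j a b c).2
  · intro i j a b c
    obtain ⟨W, ⟨⟨_, hrow, _⟩, _⟩, e1, e2⟩ := h2pt i j i (j + 1)
    exact e1 ▸ e2 ▸ hrow i j a b c
  · intro j a b
    obtain ⟨Z, ⟨⟨_, _, htop⟩, _⟩, e⟩ := hmem n j
    exact e ▸ htop j a b
  · intro i j a b c d e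
    obtain ⟨Z, ⟨_, hZX⟩, eq⟩ := hmem i j
    exact eq ▸ hZX i j a b c d e
  · intro Z hZgog hZX i j a b c
    exact hle Z ⟨hZgog, hZX⟩ i j
end
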